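/- arXiv:1810.10321 — 5 statements merged into one kernel-verified Lean document; each statement's English description precedes it below -/
import Mathlib

section
/- Let i₁, i₂, … be i.i.d. Plackett-Luce draws from a finite set S with weights θ, fix b ∈ S and i ∈ S with i ≠ b, let τ be the first time b is drawn, and let w_i(τ) be the number of times i is drawn strictly before time τ. Then w_i(τ) is geometrically distributed with success parameter θ_b/(θ_i + θ_b): Pr(w_i(τ) = m) = (θ_i/(θ_i+θ_b))^m · (θ_b/(θ_i+θ_b)) for every natural number m. -/
/-!
Split the event according to the first hitting time `τ = t` of `b` and the set `T ⊆ [0, t)` of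
times at which `i` is drawn. Each such event is a cylinder, so by independence it has probability
`pᵢ ^ #T * q ^ (t - #T) * p_b` with `q = 1 - pᵢ - p_b`. Summing over the `t.choose m` sets `T`
of size `m` and then over `t`, the negative binomial series
`∑ₜ (t.choose m) q ^ (t - m) = (1 - q)⁻¹ ^ (m + 1) = (pᵢ + p_b)⁻¹ ^ (m + 1)` gives the
geometric law.
-/

open MeasureTheory ProbabilityTheory Finset
open scoped ENNReal NNReal

theorem hasSum_choose_mul_pow_sub {𝕜 : Type*} [NormedDivisionRing 𝕜]
    {q : 𝕜} (hq : ‖q‖ < 1) (m : ℕ) :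
    HasSum (fun t : ℕ => (t.choose m : 𝕜) * q ^ (t - m)) (1 / (1 - q) ^ (m + 1)) := by
  rw [← hasSum_nat_add_iff' m]
  have hlow : ∑ t ∈ range m, (t.choose m : 𝕜) * q ^ (t - m) = 0 :=
    sum_eq_zero fun t ht => by simp [Nat.choose_eq_zero_of_lt (mem_range.mp ht)]
  simpa [hlow] using hasSum_choose_mul_geometric_of_norm_lt_one m hq

theorem ENNReal.tsum_choose_mul_pow_sub {q : ℝ≥0∞} (hq : q < 1) (m : ℕ) :
    ∑' t : ℕ, (t.choose m : ℝ≥0∞) * q ^ (t - m) = ((1 - q) ^ (m + 1))⁻¹ := by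
  lift q to ℝ≥0 using hq.ne_top
  have hq1 : q < 1 := mod_cast hq
  have hreal := hasSum_choose_mul_pow_sub (q := (q : ℝ)) (by simpa using hq1) m
  have hnn :
      HasSum (fun t : ℕ => (t.choose m : ℝ≥0) * q ^ (t - m)) ((1 - q) ^ (m + 1))⁻¹ := by
    rw [← NNReal.hasSum_coe]
    simpa [NNReal.coe_sub hq1.le] using hreal
  rw [← ENNReal.coe_one, ← ENNReal.coe_sub, ← ENNReal.coe_pow,
    ← ENNReal.coe_inv (by simpa using (tsub_pos_of_lt hq1).ne'), ← hnn.tsum_eq,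
    ENNReal.coe_tsum hnn.summable]
  simp

section FirstHit

variable {α : Type*}

def IsFirstHit (x : ℕ → α) (b : α) (t : ℕ) : Prop :=
  (∀ s < t, x s ≠ b) ∧ x t = b

def visitsBefore [DecidableEq α] (x : ℕ → α) (i : α) (t : ℕ) : Finset ℕ :=
  (range t).filter (fun s => x s = i)

theorem IsFirstHit.unique {x : ℕ → α} {b : α} {t t' : ℕ} (h : IsFirstHit x b t)
    (h' : IsFirstHit x b t') : t = t' := by
  by_contra hne
  rcases Nat.lt_or_gt_of_ne hne with hlt | hlt
  · exact h'.1 t hlt h.2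
  · exact h.1 t' hlt h'.2

/-- The constraint at time `s ≤ t` on a path that first hits `b` at time `t` and visits `i`
before `t` exactly at the times in `T`. -/
def firstHitPattern (i b : α) (t : ℕ) (T : Finset ℕ) (s : ℕ) : Set α :=
  if s ∈ T then {i} else if s = t then {b} else {i, b}ᶜ

theorem isFirstHit_and_visitsBefore_eq_iff [DecidableEq α] {i b : α} (hib : i ≠ b) {t : ℕ}
    {T : Finset ℕ} (hT : T ⊆ range t) (x : ℕ → α) :
    IsFirstHit x b t ∧ visitsBefore x i t = T ↔
      ∀ s ∈ range (t + 1), x s ∈ firstHitPattern i b t T s := by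
  have htT : t ∉ T := fun h => lt_irrefl t (mem_range.mp (hT h))
  simp only [IsFirstHit, visitsBefore, firstHitPattern, mem_range, Nat.lt_succ_iff]
  constructor
  · rintro ⟨⟨hnb, hxt⟩, rfl⟩ s hs
    split_ifs with hsT hst
    · exact (mem_filter.mp hsT).2
    · exact hst ▸ hxt
    · have hst' : s < t := lt_of_le_of_ne hs hst
      simp only [Set.mem_compl_iff, Set.mem_insert_iff, Set.mem_singleton_iff, not_or]
      exact ⟨fun hi => hsT (mem_filter.mpr ⟨mem_range.mpr hst', hi⟩), hnb s hst'⟩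
  · intro h
    have hlt : ∀ s < t, (s ∈ T → x s = i) ∧ (s ∉ T → x s ≠ i ∧ x s ≠ b) := by
      intro s hs
      have hx := h s hs.le
      rw [if_neg hs.ne] at hx
      constructor
      · intro hsT; simpa [hsT] using hx
      · intro hsT; simpa [hsT, not_or] using hx
    refine ⟨⟨fun s hs hxs => ?_, by simpa [htT] using h t le_rfl⟩, ?_⟩
    · by_cases hsT : s ∈ T
      · exact hib ((hlt s hs).1 hsT ▸ hxs)
      · exact (hlt s hs).2 hsT |>.2 hxs
    · ext s
      simp only [mem_filter, mem_range]
      constructor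
      · rintro ⟨hs, hxs⟩
        by_contra hsT
        exact ((hlt s hs).2 hsT).1 hxs
      · intro hsT
        have hs := mem_range.mp (hT hsT)
        exact ⟨hs, (hlt s hs).1 hsT⟩

theorem prod_range_succ_firstHitPattern {M : Type*} [CommMonoid M] (f : Set α → M) (i b : α)
    {t : ℕ} {T : Finset ℕ} (hT : T ⊆ range t) :
    ∏ s ∈ range (t + 1), f (firstHitPattern i b t T s)
      = f {i} ^ #T * f {i, b}ᶜ ^ (t - #T) * f {b} := by
  have htT : t ∉ T := fun h => lt_irrefl t (mem_range.mp (hT h))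
  have hbefore : ∀ s ∈ range t,
      f (firstHitPattern i b t T s) = if s ∈ T then f {i} else f {i, b}ᶜ :=
    fun s hs => by simp [firstHitPattern, apply_ite f, (mem_range.mp hs).ne]
  rw [prod_range_succ, prod_congr rfl hbefore, prod_ite, prod_const, prod_const,
    filter_mem_eq_inter, inter_eq_right.mpr hT, filter_not, filter_mem_eq_inter,
    inter_eq_right.mpr hT, card_sdiff_of_subset hT, card_range]
  simp [firstHitPattern, htT]

theorem measurableSet_firstHitPattern [MeasurableSpace α] [MeasurableSingletonClass α] (i b : α)
    (t : ℕ) (T : Finset ℕ) (s : ℕ) :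
    MeasurableSet (firstHitPattern i b t T s) := by
  unfold firstHitPattern
  split_ifs
  · exact measurableSet_singleton i
  · exact measurableSet_singleton b
  · exact ((measurableSet_singleton b).insert i).compl

end FirstHit

section IID

variable {Ω α : Type*} [DecidableEq α] {X : ℕ → Ω → α} {i b : α}

theorem setOf_isFirstHit_and_visitsBefore_eq (hib : i ≠ b) {t : ℕ} {T : Finset ℕ}
    (hT : T ⊆ range t) :
    {ω | IsFirstHit (X · ω) b t ∧ visitsBefore (X · ω) i t = T}
      = ⋂ s ∈ range (t + 1), X s ⁻¹' firstHitPattern i b t T s := by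
  ext ω
  simpa using isFirstHit_and_visitsBefore_eq_iff hib hT (X · ω)

theorem setOf_isFirstHit_and_card_visitsBefore_eq (t m : ℕ) :
    {ω | IsFirstHit (X · ω) b t ∧ #(visitsBefore (X · ω) i t) = m}
      = ⋃ T ∈ powersetCard m (range t),
          {ω | IsFirstHit (X · ω) b t ∧ visitsBefore (X · ω) i t = T} := by
  ext ω
  simp [mem_powersetCard, visitsBefore]

variable [MeasurableSpace Ω] [MeasurableSpace α] [MeasurableSingletonClass α]
  {μ : Measure Ω} {ν : Measure α}

theorem measurableSet_isFirstHit_and_visitsBefore_eq (hmeas : ∀ t, Measurable (X t))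
    (hib : i ≠ b) {t : ℕ} {T : Finset ℕ} (hT : T ⊆ range t) :
    MeasurableSet {ω | IsFirstHit (X · ω) b t ∧ visitsBefore (X · ω) i t = T} := by
  rw [setOf_isFirstHit_and_visitsBefore_eq hib hT]
  exact Finset.measurableSet_biInter _ fun s _ => hmeas s (measurableSet_firstHitPattern ..)

theorem measurableSet_isFirstHit_and_card_visitsBefore_eq (hmeas : ∀ t, Measurable (X t))
    (hib : i ≠ b) (t m : ℕ) :
    MeasurableSet {ω | IsFirstHit (X · ω) b t ∧ #(visitsBefore (X · ω) i t) = m} := by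
  rw [setOf_isFirstHit_and_card_visitsBefore_eq]
  exact Finset.measurableSet_biUnion _ fun T hT =>
    measurableSet_isFirstHit_and_visitsBefore_eq hmeas hib (mem_powersetCard.mp hT).1

theorem measure_isFirstHit_and_visitsBefore_eq (hind : iIndepFun X μ)
    (hmeas : ∀ t, Measurable (X t)) (hlaw : ∀ t, μ.map (X t) = ν) (hib : i ≠ b)
    {t : ℕ} {T : Finset ℕ} (hT : T ⊆ range t) :
    μ {ω | IsFirstHit (X · ω) b t ∧ visitsBefore (X · ω) i t = T}
      = ν {i} ^ #T * ν {i, b}ᶜ ^ (t - #T) * ν {b} := by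
  rw [setOf_isFirstHit_and_visitsBefore_eq hib hT,
    hind.measure_inter_preimage_eq_mul _ fun s _ => measurableSet_firstHitPattern ..]
  simp_rw [← Measure.map_apply (hmeas _) (measurableSet_firstHitPattern ..), hlaw]
  exact prod_range_succ_firstHitPattern ν i b hT

theorem measure_isFirstHit_and_card_visitsBefore_eq (hind : iIndepFun X μ)
    (hmeas : ∀ t, Measurable (X t)) (hlaw : ∀ t, μ.map (X t) = ν) (hib : i ≠ b)
    (t m : ℕ) :
    μ {ω | IsFirstHit (X · ω) b t ∧ #(visitsBefore (X · ω) i t) = m}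
      = t.choose m * ν {i} ^ m * ν {i, b}ᶜ ^ (t - m) * ν {b} := by
  have hfibre : ∀ T ∈ powersetCard m (range t),
      μ {ω | IsFirstHit (X · ω) b t ∧ visitsBefore (X · ω) i t = T}
        = ν {i} ^ m * ν {i, b}ᶜ ^ (t - m) * ν {b} := by
    intro T hTmem
    obtain ⟨hT, rfl⟩ := mem_powersetCard.mp hTmem
    exact measure_isFirstHit_and_visitsBefore_eq hind hmeas hlaw hib hT
  rw [setOf_isFirstHit_and_card_visitsBefore_eq, measure_biUnion_finset]
  · rw [sum_congr rfl hfibre, sum_const, card_powersetCard, card_range, nsmul_eq_mul]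
    ring
  · intro T _ T' _ hne
    exact Set.disjoint_left.mpr fun ω h h' => hne (h.2.symm.trans h'.2)
  · exact fun T hT =>
      measurableSet_isFirstHit_and_visitsBefore_eq hmeas hib (mem_powersetCard.mp hT).1

theorem measure_card_visitsBefore_firstHit_eq [IsProbabilityMeasure ν] (hind : iIndepFun X μ)
    (hmeas : ∀ t, Measurable (X t)) (hlaw : ∀ t, μ.map (X t) = ν) (hib : i ≠ b)
    (hb : ν {b} ≠ 0) (m : ℕ) :
    μ {ω | ∃ t, IsFirstHit (X · ω) b t ∧ #(visitsBefore (X · ω) i t) = m}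
      = (ν {i} / (ν {i} + ν {b})) ^ m * (ν {b} / (ν {i} + ν {b})) := by
  have hpair : ν {i, b} = ν {i} + ν {b} := by
    rw [Set.insert_eq, measure_union (Set.disjoint_singleton.mpr hib) (measurableSet_singleton b)]
  have hsub : 1 - ν {i, b}ᶜ = ν {i} + ν {b} := by
    rw [prob_compl_eq_one_sub ((measurableSet_singleton b).insert i),
      ENNReal.sub_sub_cancel ENNReal.one_ne_top prob_le_one, hpair]
  have hq : ν {i, b}ᶜ < 1 :=
    tsub_pos_iff_lt.mp (by rw [hsub]; exact pos_iff_ne_zero.mpr (by simp [hb]))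
  rw [Set.ofPred_exists, measure_iUnion
    (fun t t' hne => Set.disjoint_left.mpr fun ω h h' => hne (h.1.unique h'.1))
    (fun t => measurableSet_isFirstHit_and_card_visitsBefore_eq hmeas hib t m)]
  simp_rw [measure_isFirstHit_and_card_visitsBefore_eq hind hmeas hlaw hib]
  calc ∑' t, (t.choose m : ℝ≥0∞) * ν {i} ^ m * ν {i, b}ᶜ ^ (t - m) * ν {b}
      = ν {i} ^ m * ν {b} * ∑' t, (t.choose m : ℝ≥0∞) * ν {i, b}ᶜ ^ (t - m) := by
        rw [← ENNReal.tsum_mul_left]; congr 1; ext t; ring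
    _ = ν {i} ^ m * ν {b} * ((ν {i} + ν {b}) ^ (m + 1))⁻¹ := by
        rw [ENNReal.tsum_choose_mul_pow_sub hq, hsub]
    _ = _ := by
        rw [div_eq_mul_inv, div_eq_mul_inv, mul_pow, ENNReal.inv_pow, pow_succ]
        ring

end IID

theorem count_before_first_hit_geometric_general {Ω : Type*} [MeasurableSpace Ω]
    (μ : Measure Ω) [IsProbabilityMeasure μ] {n : ℕ}
    (S : Finset (Fin n))
    (θ : Fin n → ℝ) (hθ : ∀ i, 0 < θ i)
    (X : ℕ → Ω → Fin n) (hmeas : ∀ t, Measurable (X t))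
    (hindep : iIndepFun X μ)
    (hlaw : ∀ t i, μ {ω | X t ω = i}
      = ENNReal.ofReal (if i ∈ S then θ i / ∑ j ∈ S, θ j else 0))
    (b i : Fin n) (hb : b ∈ S) (hi : i ∈ S) (hib : i ≠ b) (m : ℕ) :
    μ {ω | ∃ t, (∀ s < t, X s ω ≠ b) ∧ X t ω = b ∧
        ((Finset.range t).filter (fun s => X s ω = i)).card = m}
      = ENNReal.ofReal
        ((θ i / (θ i + θ b)) ^ m * (θ b / (θ i + θ b))) := by
  set ν := μ.map (X 0)
  have : IsProbabilityMeasure ν := Measure.isProbabilityMeasure_map (hmeas 0).aemeasurable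
  have hν : ∀ t, μ.map (X t) = ν := fun t => Measure.ext_of_singleton fun x => by
    rw [Measure.map_apply (hmeas t) (measurableSet_singleton x),
      Measure.map_apply (hmeas 0) (measurableSet_singleton x)]
    exact (hlaw t x).trans (hlaw 0 x).symm
  have hZ : 0 < ∑ j ∈ S, θ j := sum_pos (fun j _ => hθ j) ⟨b, hb⟩
  have hνS : ∀ j ∈ S, ν {j} = ENNReal.ofReal (θ j / ∑ k ∈ S, θ k) := fun j hj => by
    rw [Measure.map_apply (hmeas 0) (measurableSet_singleton j)]
    exact (hlaw 0 j).trans (by rw [if_pos hj])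
  have hpi : 0 < θ i / ∑ k ∈ S, θ k := div_pos (hθ i) hZ
  have hpb : 0 < θ b / ∑ k ∈ S, θ k := div_pos (hθ b) hZ
  have hevent : {ω | ∃ t, (∀ s < t, X s ω ≠ b) ∧ X t ω = b ∧
      ((Finset.range t).filter (fun s => X s ω = i)).card = m}
      = {ω | ∃ t, IsFirstHit (X · ω) b t ∧ #(visitsBefore (X · ω) i t) = m} := by
    simp only [IsFirstHit, visitsBefore, and_assoc]
  rw [hevent, measure_card_visitsBefore_firstHit_eq hindep hmeas hν hib
      (by rw [hνS b hb]; exact ENNReal.ofReal_ne_zero_iff.mpr hpb) m,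
    hνS i hi, hνS b hb, ← ENNReal.ofReal_add hpi.le hpb.le,
    ← ENNReal.ofReal_div_of_pos (add_pos hpi hpb),
    ← ENNReal.ofReal_div_of_pos (add_pos hpi hpb),
    ← ENNReal.ofReal_pow (by positivity), ← ENNReal.ofReal_mul (by positivity)]
  congr 1
  field_simp

/-- Let i₁, i₂, … be i.i.d. Plackett-Luce draws from a finite set S, b ∈ S, and
let τ be the first time b is drawn.  For i ∈ S with i ≠ b, the number of times
i is drawn strictly before τ is geometric with parameter θ_b/(θ_i+θ_b):
Pr(w_i(τ) = m) = (θ_i/(θ_i+θ_b))^m · (θ_b/(θ_i+θ_b)). -/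
theorem count_before_first_hit_geometric {Ω : Type*} [MeasurableSpace Ω]
    (μ : Measure Ω) [IsProbabilityMeasure μ] {n : ℕ}
    (S : Finset (Fin n)) (hS : S.Nonempty)
    (θ : Fin n → ℝ) (hθ : ∀ i, 0 < θ i)
    (X : ℕ → Ω → Fin n) (hmeas : ∀ t, Measurable (X t))
    (hindep : iIndepFun X μ)
    (hlaw : ∀ t i, μ {ω | X t ω = i}
      = ENNReal.ofReal (if i ∈ S then θ i / ∑ j ∈ S, θ j else 0))
    (b i : Fin n) (hb : b ∈ S) (hi : i ∈ S) (hib : i ≠ b) (m : ℕ) :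
    μ {ω | ∃ t, (∀ s < t, X s ω ≠ b) ∧ X t ω = b ∧
        ((Finset.range t).filter (fun s => X s ω = i)).card = m}
      = ENNReal.ofReal
        ((θ i / (θ i + θ b)) ^ m * (θ b / (θ i + θ b))) :=
  count_before_first_hit_geometric_general μ S θ hθ X hmeas hindep hlaw b i hb hi hib m
end

section
/- Concentration of a sum of geometric random variables via the negative binomial: if X₁,…,X_d are i.i.d. geometric random variables with success parameter θ_b/(θ_b+θ_i) (counting failures before success) and Z = Σ X_i, then for any η > 0, Pr(|Z/d - θ_i/θ_b| ≥ η) < 2·exp( -2dη² / ((1+θ_i/θ_b)²(η + 1 + θ_i/θ_b)) ). -/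
/-!
Chernoff's bound for `Z` at the optimal tilt, with threshold `d * a`, has exponent
`d (1 + a) KL(Ber (1 / (1 + a)) ‖ Ber p)`, where `p = 1 / (1 + m)` is the success probability:
this is the divergence governing the dual event "fewer than `d` successes in `d (1 + a)`
Bernoulli trials". Pinsker's inequality `KL ≥ 2 (x - p)²` turns it into
`2 d (a - m)² / ((1 + m)² (1 + a))`, which at `a = m + η` is the claimed exponent and at
`a = m - η` is strictly better. When `η ≥ m` the lower tail is the event `Z = 0`, of probability
`(1 + m)⁻ᵈ`, or is empty.
-/

open MeasureTheory ProbabilityTheory Real Set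

/-- **Pinsker's inequality** for the Bernoulli laws of parameters `x` and `p`. -/
theorem two_mul_sq_sub_le_bernoulli_kl {x p : ℝ} (hx0 : 0 < x) (hx1 : x < 1)
    (hp0 : 0 < p) (hp1 : p < 1) :
    2 * (x - p) ^ 2 ≤ x * log (x / p) + (1 - x) * log ((1 - x) / (1 - p)) := by
  set f : ℝ → ℝ := fun y => x * log y + (1 - x) * log (1 - y) + 2 * (x - y) ^ 2
  have hf : ∀ {y}, 0 < y → y < 1 →
      HasDerivAt f ((x - y) * (1 - 2 * y) ^ 2 / (y * (1 - y))) y := by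
    intro y hy0 hy1
    have hlog1 : HasDerivAt (fun y => log (1 - y)) (-1 / (1 - y)) y := by
      simpa using ((hasDerivAt_id' y).const_sub 1).log (by linarith)
    refine ((((hasDerivAt_log hy0.ne').const_mul x).add (hlog1.const_mul (1 - x))).add
      (((hasDerivAt_id' y).const_sub x).pow 2 |>.const_mul 2)).congr_deriv ?_
    have : 1 - y ≠ 0 := by linarith
    field_simp
    ring
  suffices f p ≤ f x by
    rw [log_div hx0.ne' hp0.ne', log_div (by linarith) (by linarith)]
    norm_num [f] at this
    linarith
  have hderiv : ∀ {a b}, 0 < a → b < 1 → ∀ y ∈ interior (Icc a b),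
      HasDerivWithinAt f ((x - y) * (1 - 2 * y) ^ 2 / (y * (1 - y))) (interior (Icc a b)) y := by
    intro a b ha hb y hy
    rw [interior_Icc] at hy ⊢
    exact (hf (ha.trans hy.1) (hy.2.trans hb)).hasDerivWithinAt
  have hcont : ∀ {a b}, 0 < a → b < 1 → ContinuousOn f (Icc a b) := fun ha hb y hy =>
    (hf (ha.trans_le hy.1) (hy.2.trans_lt hb)).continuousAt.continuousWithinAt
  rcases le_total p x with hpx | hxp
  · refine monotoneOn_of_hasDerivWithinAt_nonneg (convex_Icc p x) (hcont hp0 hx1) (hderiv hp0 hx1)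
      (fun y hy => ?_) ⟨le_rfl, hpx⟩ ⟨hpx, le_rfl⟩ hpx
    rw [interior_Icc] at hy
    have : 0 < y * (1 - y) := mul_pos (hp0.trans hy.1) (by linarith [hy.2])
    exact div_nonneg (mul_nonneg (by linarith [hy.2]) (sq_nonneg _)) this.le
  · refine antitoneOn_of_hasDerivWithinAt_nonpos (convex_Icc x p) (hcont hx0 hp1) (hderiv hx0 hp1)
      (fun y hy => ?_) ⟨le_rfl, hxp⟩ ⟨hxp, le_rfl⟩ hxp
    rw [interior_Icc] at hy
    have : 0 < y * (1 - y) := mul_pos (hx0.trans hy.1) (by linarith [hy.2])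
    exact div_nonpos_of_nonpos_of_nonneg (mul_nonpos_of_nonpos_of_nonneg (by linarith [hy.1])
      (sq_nonneg _)) this.le

lemma exp_mul_geometric_mgf_pow_le {p a t : ℝ} (hp0 : 0 < p) (hp1 : p < 1) (ha : 0 < a)
    (ht : exp t = a / ((1 + a) * (1 - p))) (d : ℕ) :
    exp (-t * (d * a)) * (p / (1 - (1 - p) * exp t)) ^ d
      ≤ exp (-(2 * d * (1 - (1 + a) * p) ^ 2 / (1 + a))) := by
  have h1a : 0 < 1 + a := by linarith
  have hmgf : p / (1 - (1 - p) * exp t) = p * (1 + a) := by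
    rw [ht]; field_simp [show 1 - p ≠ 0 by linarith]; ring
  set x := (1 + a)⁻¹
  have hxa : x * (1 + a) = 1 := inv_mul_cancel₀ h1a.ne'
  have hx0 : 0 < x := inv_pos.2 h1a
  have hx1 : x < 1 := inv_lt_one_of_one_lt₀ (by linarith)
  -- the Chernoff exponent at the optimal `t` is `(1 + a)` times a Bernoulli divergence
  have hkl : (1 + a) * (x * log (x / p) + (1 - x) * log ((1 - x) / (1 - p)))
      = a * t - log (p * (1 + a)) := by
    have h1x : (1 - x) / (1 - p) = exp t := by
      rw [ht, div_eq_div_iff (by linarith) (by positivity)]; linear_combination -(1 - p) * hxa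
    have hxp : x / p = (p * (1 + a))⁻¹ := by rw [mul_inv, div_eq_mul_inv, mul_comm]
    rw [h1x, hxp, log_exp, log_inv]
    linear_combination (-log (p * (1 + a)) - t) * hxa
  have hpinsker := mul_le_mul_of_nonneg_left (two_mul_sq_sub_le_bernoulli_kl hx0 hx1 hp0 hp1)
    h1a.le
  rw [hkl] at hpinsker
  have hdev : 2 * d * (1 - (1 + a) * p) ^ 2 / (1 + a) = d * ((1 + a) * (2 * (x - p) ^ 2)) := by
    rw [div_eq_iff h1a.ne']; linear_combination -2 * d * (x * (1 + a) + 1 - 2 * (1 + a) * p) * hxa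
  rw [hmgf, ← exp_log (by positivity : 0 < p * (1 + a)), ← exp_nat_mul, ← exp_add, exp_le_exp,
    hdev]
  nlinarith [(Nat.cast_nonneg d : (0 : ℝ) ≤ d)]

lemma inv_one_add_pow_lt_exp {m : ℝ} (hm : 0 < m) {d : ℕ} (hd : 0 < d) :
    ((1 + m)⁻¹) ^ d < exp (-(2 * d * m ^ 2) / ((1 + m) ^ 2 * (m + 1 + m))) := by
  have h1m : 0 < 1 + m := by linarith
  have hrate : 2 * m ^ 2 / ((1 + m) ^ 2 * (m + 1 + m)) < 1 - (1 + m)⁻¹ := by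
    rw [div_lt_iff₀ (by positivity)]
    field_simp
    nlinarith
  have hd' : (0 : ℝ) < d := by exact_mod_cast hd
  have := mul_lt_mul_of_pos_left (hrate.trans_le (one_sub_inv_le_log_of_pos h1m)) hd'
  rw [← exp_log (by positivity : 0 < (1 + m)⁻¹ ^ d), exp_lt_exp, log_pow, log_inv]
  linarith [show -(2 * d * m ^ 2) / ((1 + m) ^ 2 * (m + 1 + m))
    = -(d * (2 * m ^ 2 / ((1 + m) ^ 2 * (m + 1 + m)))) by ring]

section Geometric

variable {p : unitInterval} {t : ℝ}

lemma geometric_weight_mul_exp (n : ℕ) :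
    (1 - p : ℝ) ^ n * p * exp (t * n) = ((1 - p) * exp t) ^ n * p := by
  rw [mul_comm t, exp_nat_mul, mul_pow]; ring

lemma integrable_exp_mul_geometricMeasure (hp : p ≠ 0) (ht : (1 - p) * exp t < 1) :
    Integrable (fun n : ℕ => exp (t * n)) (geometricMeasure p) := by
  rw [integrable_geometricMeasure_iff hp]
  simp_rw [norm_of_nonneg (exp_pos _).le, geometric_weight_mul_exp]
  exact (summable_geometric_of_lt_one (by have := p.2.2; positivity) ht).mul_right _

lemma mgf_geometricMeasure (hp : p ≠ 0) (ht : (1 - p) * exp t < 1) :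
    mgf (fun n : ℕ => (n : ℝ)) (geometricMeasure p) t = p / (1 - (1 - p) * exp t) := by
  rw [mgf, integral_geometricMeasure hp]
  simp_rw [smul_eq_mul, geometric_weight_mul_exp]
  rw [tsum_mul_right, tsum_geometric_of_lt_one (by have := p.2.2; positivity) ht]
  ring

variable {Ω : Type*} [MeasurableSpace Ω] {μ : Measure Ω}

lemma map_eq_geometricMeasure {X : Ω → ℕ} (hX : Measurable X) (hp : p ≠ 0)
    (hlaw : ∀ n, μ {ω | X ω = n} = ENNReal.ofReal ((1 - p) ^ n * p)) :
    μ.map X = geometricMeasure p :=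
  Measure.ext_of_singleton fun n => by
    rw [Measure.map_apply hX (measurableSet_singleton n), geometricMeasure_singleton hp]
    exact hlaw n

lemma integrable_exp_mul_and_mgf_of_geometric {X : Ω → ℕ} (hX : Measurable X)
    (hlaw : μ.map X = geometricMeasure p) (hp : p ≠ 0) (ht : (1 - p) * exp t < 1) :
    Integrable (fun ω => exp (t * X ω)) μ ∧
      mgf (fun ω => (X ω : ℝ)) μ t = p / (1 - (1 - p) * exp t) := by
  have hint := integrable_exp_mul_geometricMeasure hp ht
  rw [← hlaw] at hint
  refine ⟨(integrable_map_measure hint.1 hX.aemeasurable).1 hint, ?_⟩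
  rw [← mgf_geometricMeasure hp ht, ← hlaw, mgf_map hX.aemeasurable hint.1]
  rfl

variable {ι : Type*} [Fintype ι]

structure IIDGeometric (μ : Measure Ω) (p : unitInterval) (X : ι → Ω → ℕ) : Prop where
  measurable : ∀ k, Measurable (X k)
  indep : iIndepFun X μ
  map_eq : ∀ k, μ.map (X k) = geometricMeasure p

variable {X : ι → Ω → ℕ}

lemma IIDGeometric.integrable_exp_mul_and_mgf_sum (hX : IIDGeometric μ p X) (hp : p ≠ 0)
    (ht : (1 - p) * exp t < 1) :
    Integrable (fun ω => exp (t * ∑ k, (X k ω : ℝ))) μ ∧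
      mgf (fun ω => ∑ k, (X k ω : ℝ)) μ t
        = (p / (1 - (1 - p) * exp t)) ^ Fintype.card ι := by
  have := hX.indep.isProbabilityMeasure
  have hcast : iIndepFun (fun k ω => (X k ω : ℝ)) μ :=
    hX.indep.comp (fun _ => Nat.cast) fun _ => measurable_from_nat
  have hmeas k : Measurable fun ω => (X k ω : ℝ) := measurable_from_nat.comp (hX.measurable k)
  have hsum : (fun ω => ∑ k, (X k ω : ℝ)) = ∑ k, fun ω => (X k ω : ℝ) := by
    ext ω; simp
  have hXk k := integrable_exp_mul_and_mgf_of_geometric (hX.measurable k) (hX.map_eq k) hp ht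
  refine ⟨?_, ?_⟩
  · simpa [hsum] using hcast.integrable_exp_mul_sum hmeas (s := Finset.univ) fun k _ => (hXk k).1
  · rw [hsum, hcast.mgf_sum hmeas, Finset.prod_congr rfl fun k _ => (hXk k).2,
      Finset.prod_const, Finset.card_univ]

lemma IIDGeometric.integrable_and_exp_mul_mgf_sum_le (hX : IIDGeometric μ p X) (hp0 : p ≠ 0)
    (hp1 : p ≠ 1) {a : ℝ} (ha : 0 < a) (ht : exp t = a / ((1 + a) * (1 - p))) :
    Integrable (fun ω => exp (t * ∑ k, (X k ω : ℝ))) μ ∧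
      exp (-t * (Fintype.card ι * a)) * mgf (fun ω => ∑ k, (X k ω : ℝ)) μ t
        ≤ exp (-(2 * Fintype.card ι * (1 - (1 + a) * p) ^ 2 / (1 + a))) := by
  have hp0' : (0 : ℝ) < p := unitInterval.pos_iff_ne_zero.2 hp0
  have hp1' : (p : ℝ) < 1 := unitInterval.lt_one_iff_ne_one.2 hp1
  have hlt : (1 - p) * exp t < 1 := by
    rw [ht, mul_div_left_comm, div_mul_cancel_right₀ (by linarith), ← div_eq_mul_inv,
      div_lt_one (by linarith)]
    linarith
  obtain ⟨hint, hmgf⟩ := hX.integrable_exp_mul_and_mgf_sum hp0 hlt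
  exact ⟨hint, hmgf ▸ exp_mul_geometric_mgf_pow_le hp0' hp1' ha ht _⟩

lemma IIDGeometric.measureReal_le_sum (hX : IIDGeometric μ p X) (hp0 : p ≠ 0) (hp1 : p ≠ 1)
    {a : ℝ} (ha : 0 < a) (hpa : 1 ≤ (1 + a) * p) :
    μ.real {ω | Fintype.card ι * a ≤ ∑ k, (X k ω : ℝ)}
      ≤ exp (-(2 * Fintype.card ι * (1 - (1 + a) * p) ^ 2 / (1 + a))) := by
  have := hX.indep.isProbabilityMeasure
  have hp1' : (p : ℝ) < 1 := unitInterval.lt_one_iff_ne_one.2 hp1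
  have hq : 0 < (1 + a) * (1 - p) := by nlinarith
  set t := log (a / ((1 + a) * (1 - p)))
  have ht : exp t = a / ((1 + a) * (1 - p)) := exp_log (by positivity)
  have ht0 : 0 ≤ t := log_nonneg <| (one_le_div hq).2 (by linarith)
  obtain ⟨hint, hle⟩ := hX.integrable_and_exp_mul_mgf_sum_le hp0 hp1 ha ht
  exact (measure_ge_le_exp_mul_mgf _ ht0 hint).trans hle

lemma IIDGeometric.measureReal_sum_le (hX : IIDGeometric μ p X) (hp0 : p ≠ 0) (hp1 : p ≠ 1)
    {a : ℝ} (ha : 0 < a) (hpa : (1 + a) * p ≤ 1) :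
    μ.real {ω | ∑ k, (X k ω : ℝ) ≤ Fintype.card ι * a}
      ≤ exp (-(2 * Fintype.card ι * (1 - (1 + a) * p) ^ 2 / (1 + a))) := by
  have := hX.indep.isProbabilityMeasure
  have hp1' : (p : ℝ) < 1 := unitInterval.lt_one_iff_ne_one.2 hp1
  have hq : 0 < (1 + a) * (1 - p) := by nlinarith
  set t := log (a / ((1 + a) * (1 - p)))
  have ht : exp t = a / ((1 + a) * (1 - p)) := exp_log (by positivity)
  have ht0 : t ≤ 0 := log_nonpos (by positivity) <| (div_le_one hq).2 (by linarith)
  obtain ⟨hint, hle⟩ := hX.integrable_and_exp_mul_mgf_sum_le hp0 hp1 ha ht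
  exact (measure_le_le_exp_mul_mgf _ ht0 hint).trans hle

lemma IIDGeometric.measureReal_sum_nonpos (hX : IIDGeometric μ p X) (hp0 : p ≠ 0) :
    μ.real {ω | ∑ k, (X k ω : ℝ) ≤ 0} = (p : ℝ) ^ Fintype.card ι := by
  have hset : {ω | ∑ k, (X k ω : ℝ) ≤ 0} = ⋂ k, X k ⁻¹' {0} := by
    ext ω
    simp [← Nat.cast_sum, Finset.sum_eq_zero_iff]
  have hzero k : μ (X k ⁻¹' {0}) = ENNReal.ofReal p := by
    rw [← Measure.map_apply (hX.measurable k) (measurableSet_singleton 0), hX.map_eq k,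
      geometricMeasure_singleton hp0, pow_zero, one_mul]
  rw [measureReal_def, hset,
    hX.indep.meas_iInter fun k => ⟨{0}, measurableSet_singleton 0, rfl⟩]
  simp [hzero, ENNReal.toReal_ofReal p.2.1]

variable {m η : ℝ}

lemma ne_zero_and_ne_one_of_coe_eq_inv (hm : 0 < m) (hpm : (p : ℝ) = (1 + m)⁻¹) :
    p ≠ 0 ∧ p ≠ 1 := by
  constructor <;> intro h <;> simp [h] at hpm <;> linarith [inv_pos.2 (show 0 < 1 + m by linarith)]

lemma IIDGeometric.measureReal_upper_tail_le (hX : IIDGeometric μ p X) (hm : 0 < m)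
    (hpm : (p : ℝ) = (1 + m)⁻¹) (hη : 0 < η) :
    μ.real {ω | Fintype.card ι * (m + η) ≤ ∑ k, (X k ω : ℝ)}
      ≤ exp (-(2 * Fintype.card ι * η ^ 2) / ((1 + m) ^ 2 * (η + 1 + m))) := by
  obtain ⟨hp0, hp1⟩ := ne_zero_and_ne_one_of_coe_eq_inv hm hpm
  have hpa : 1 ≤ (1 + (m + η)) * p := by
    rw [hpm, ← div_eq_mul_inv, one_le_div (by linarith)]; linarith
  convert hX.measureReal_le_sum hp0 hp1 (by linarith) hpa using 2
  rw [hpm]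
  field_simp
  ring

lemma IIDGeometric.measureReal_lower_tail_lt (hX : IIDGeometric μ p X) (hm : 0 < m)
    (hpm : (p : ℝ) = (1 + m)⁻¹) (hη : 0 < η) (hd : 0 < Fintype.card ι) :
    μ.real {ω | ∑ k, (X k ω : ℝ) ≤ Fintype.card ι * (m - η)}
      < exp (-(2 * Fintype.card ι * η ^ 2) / ((1 + m) ^ 2 * (η + 1 + m))) := by
  obtain ⟨hp0, hp1⟩ := ne_zero_and_ne_one_of_coe_eq_inv hm hpm
  have hd' : (0 : ℝ) < Fintype.card ι := by exact_mod_cast hd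
  rcases lt_trichotomy η m with hηm | rfl | hηm
  · have hpa : (1 + (m - η)) * p ≤ 1 := by
      rw [hpm, ← div_eq_mul_inv, div_le_one (by linarith)]; linarith
    refine (hX.measureReal_sum_le hp0 hp1 (by linarith) hpa).trans_lt ?_
    rw [exp_lt_exp, hpm, ← neg_div]
    have hdev : (1 - (1 + (m - η)) * (1 + m)⁻¹) ^ 2 = η ^ 2 / (1 + m) ^ 2 := by
      field_simp; ring
    have hC : 0 < 2 * Fintype.card ι * η ^ 2 / (1 + m) ^ 2 := by positivity
    calc -(2 * Fintype.card ι * (1 - (1 + (m - η)) * (1 + m)⁻¹) ^ 2) / (1 + (m - η))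
        = -(2 * Fintype.card ι * η ^ 2 / (1 + m) ^ 2 / (1 + (m - η))) := by rw [hdev]; ring
      _ < -(2 * Fintype.card ι * η ^ 2 / (1 + m) ^ 2 / (η + 1 + m)) :=
        neg_lt_neg (div_lt_div_of_pos_left hC (by linarith) (by linarith))
      _ = -(2 * Fintype.card ι * η ^ 2) / ((1 + m) ^ 2 * (η + 1 + m)) := by
        rw [neg_div, div_div]
  · rw [sub_self, mul_zero, hX.measureReal_sum_nonpos hp0, hpm]
    exact inv_one_add_pow_lt_exp hm hd
  · have hempty : {ω | ∑ k, (X k ω : ℝ) ≤ Fintype.card ι * (m - η)} = ∅ := by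
      refine eq_empty_of_forall_notMem fun ω hω => ?_
      have : (Fintype.card ι : ℝ) * (m - η) < 0 := mul_neg_of_pos_of_neg hd' (by linarith)
      exact (Finset.sum_nonneg fun k _ => Nat.cast_nonneg (X k ω)).not_gt (hω.trans_lt this)
    rw [hempty, measureReal_empty]
    exact exp_pos _

end Geometric

/-- Concentration of a sum of i.i.d. geometric random variables (failures before
first success, parameter θ_b/(θ_b+θ_i)): with Z = Σ_{k=1}^d X_k, for any η > 0,
Pr(|Z/d - θ_i/θ_b| ≥ η) < 2·exp(-2dη² / ((1+θ_i/θ_b)²(η+1+θ_i/θ_b))). -/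
theorem geometric_sum_concentration {Ω : Type*} [MeasurableSpace Ω]
    (μ : Measure Ω) [IsProbabilityMeasure μ]
    (θi θb : ℝ) (hθi : 0 < θi) (hθb : 0 < θb)
    (d : ℕ) (hd : 0 < d) (X : Fin d → Ω → ℕ)
    (hmeas : ∀ k, Measurable (X k))
    (hindep : iIndepFun X μ)
    (hlaw : ∀ k m, μ {ω | X k ω = m}
      = ENNReal.ofReal ((θi / (θb + θi)) ^ m * (θb / (θb + θi))))
    (η : ℝ) (hη : 0 < η) :
    μ {ω | η ≤ |(∑ k, (X k ω : ℝ)) / d - θi / θb|}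
      < ENNReal.ofReal (2 * Real.exp (-(2 * d * η ^ 2)
          / ((1 + θi / θb) ^ 2 * (η + 1 + θi / θb)))) := by
  set m := θi / θb
  have hm : 0 < m := div_pos hθi hθb
  have hθ : 0 < θb + θi := by linarith
  let p : unitInterval := ⟨θb / (θb + θi), by positivity, (div_le_one hθ).2 (by linarith)⟩
  have hpm : (p : ℝ) = (1 + m)⁻¹ := by
    simp only [p, m]; field_simp
  have hX : IIDGeometric μ p X := ⟨hmeas, hindep, fun k =>
    map_eq_geometricMeasure (hmeas k) (ne_zero_and_ne_one_of_coe_eq_inv hm hpm).1 fun n => by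
      rw [hlaw]; congr 3; simp only [p]; field_simp; ring⟩
  have hup := hX.measureReal_upper_tail_le hm hpm hη
  have hlow := hX.measureReal_lower_tail_lt hm hpm hη (by simpa)
  rw [Fintype.card_fin] at hup hlow
  have hd' : (0 : ℝ) < d := by exact_mod_cast hd
  have hsub : {ω | η ≤ |(∑ k, (X k ω : ℝ)) / d - m|} ⊆
      {ω | d * (m + η) ≤ ∑ k, (X k ω : ℝ)} ∪
        {ω | ∑ k, (X k ω : ℝ) ≤ d * (m - η)} := by
    intro ω (hω : η ≤ |_|)
    rcases le_abs'.1 hω with h | h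
    · exact Or.inr ((div_le_iff₀' hd').1 (by linarith))
    · exact Or.inl ((le_div_iff₀' hd').1 (by linarith))
  rw [ENNReal.lt_ofReal_iff_toReal_lt (measure_ne_top _ _), two_mul]
  exact (measureReal_mono hsub).trans_lt
    ((measureReal_union_le _ _).trans_lt (add_lt_add_of_le_of_lt hup hlow))
end

section
/- The upper-tail deviation of a negative binomial via binomial Hoeffding: for Z ∼ NB(n, p) with p = θ_b/(θ_b+θ_i) and μ = θ_i/θ_b, and any η > 0, Pr(Z/n - μ > η) ≤ exp( -2nη² / ((1+μ)²(η+1+μ)) ), using the duality Pr(Z > m) = Pr(Bin(m+n, p) < n). -/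
/-!
Hoeffding's lemma for a single Bernoulli trial, raised to the `N`-th power, bounds the
moment generating function of `Bin(N, p)`, and Chernoff's bound turns this into
`P(Bin(N, p) ≤ x) ≤ exp (-2 (N p - x)² / N)`. The event `Z/n > μ + η` is `Z > m` with
`m = ⌊n (μ + η)⌋`, and by duality `P(Z > m) = P(Bin(m + n, p) < n)`: fewer than `n` successes
in the first `m + n` trials. The choice of `m` makes the gap `(m + n) p - (n - 1)` at least
`n p η` while `m + n ≤ n (1 + μ + η)`, and `1 + μ = 1 / p` gives the stated exponent.
-/

open MeasureTheory ProbabilityTheory Real Finset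
open scoped unitInterval

lemma one_sub_add_mul_exp_le (p : I) (t : ℝ) :
    1 - p + p * exp t ≤ exp (p * t + t ^ 2 / 8) := by
  let X : Bool → ℝ := fun b => (b.toNat : ℝ)
  have hX := (hasSubgaussianMGF_of_mem_Icc (μ := Ber(true, false, p)) (X := X)
    (a := 0) (b := 1) (by fun_prop) (ae_of_all _ fun b => by cases b <;> simp [X])).mgf_le t
  have hmean : ∫ b, X b ∂Ber(true, false, p) = p := by simp [integral_bernoulliMeasure, X]
  simp only [mgf, integral_bernoulliMeasure, hmean, X] at hX
  norm_num at hX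
  have h1 : exp (p * t) * exp (t * (1 - p)) = exp t := by rw [← exp_add]; ring_nf
  have h2 : exp (p * t) * exp (-(t * p)) = 1 := by rw [← exp_add]; ring_nf; exact exp_zero
  calc 1 - p + p * exp t
      = exp (p * t) * (p * exp (t * (1 - p)) + (1 - p) * exp (-(t * p))) := by
        linear_combination (-(p : ℝ)) * h1 - (1 - p) * h2
    _ ≤ exp (p * t) * exp (1 / 4 * t ^ 2 / 2) := by gcongr
    _ = exp (p * t + t ^ 2 / 8) := by rw [← exp_add]; ring_nf

lemma mgf_binomial (N : ℕ) (p : I) (t : ℝ) :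
    mgf (fun k : ℕ => (k : ℝ)) Bin(N, p) t = (1 - p + p * exp t) ^ N := by
  rw [mgf, integral_binomial, ← Nat.range_succ_eq_Iic, add_comm (1 - _ : ℝ), add_pow]
  refine Finset.sum_congr rfl fun k _ => ?_
  rw [smul_eq_mul, mul_pow, ← exp_nat_mul]
  ring_nf

lemma binomial_real_setOf_le_le_exp (p : I) {N : ℕ} (hN : 0 < N) {x : ℝ}
    (hx : x ≤ (N : ℝ) * p) :
    Bin(N, p).real {k | (k : ℝ) ≤ x} ≤ exp (-2 * (N * p - x) ^ 2 / N) := by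
  have hN' : (0 : ℝ) < N := by exact_mod_cast hN
  -- `t` minimises the exponent `-t x + N (p t + t² / 8)` of the Chernoff bound below.
  set t : ℝ := -4 * (N * p - x) / N
  have ht : t ≤ 0 := div_nonpos_of_nonpos_of_nonneg (by linarith) hN'.le
  calc Bin(N, p).real {k | (k : ℝ) ≤ x}
      ≤ exp (-t * x) * mgf (fun k : ℕ => (k : ℝ)) Bin(N, p) t :=
        measure_le_le_exp_mul_mgf x ht (integrable_binomial _)
    _ ≤ exp (-t * x) * exp (p * t + t ^ 2 / 8) ^ N := by
        rw [mgf_binomial]; gcongr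
        · exact add_nonneg (sub_nonneg.2 p.2.2) (mul_nonneg p.2.1 (exp_pos t).le)
        · exact one_sub_add_mul_exp_le p t
    _ = exp (-2 * (N * p - x) ^ 2 / N) := by
        rw [← exp_nat_mul, ← exp_add]; congr 1; simp only [t]; field_simp; ring

lemma sum_range_succ_choose_add_succ (p : ℝ) {M s : ℕ} (hs : s ≤ M) :
    ∑ j ∈ range (s + 1), ((M + 1).choose j : ℝ) * p ^ j * (1 - p) ^ (M + 1 - j)
      + M.choose s * p ^ (s + 1) * (1 - p) ^ (M - s)
      = ∑ j ∈ range (s + 1), (M.choose j : ℝ) * p ^ j * (1 - p) ^ (M - j) := by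
  have hpascal : ∑ j ∈ range (s + 1), ((M + 1).choose j : ℝ) * p ^ j * (1 - p) ^ (M + 1 - j)
      = ∑ i ∈ range s, (M.choose i : ℝ) * p ^ (i + 1) * (1 - p) ^ (M - i)
        + ∑ i ∈ range s, (M.choose (i + 1) : ℝ) * p ^ (i + 1) * (1 - p) ^ (M - i)
        + (1 - p) ^ (M + 1) := by
    rw [sum_range_succ', ← sum_add_distrib]
    simp only [Nat.choose_succ_succ, Nat.cast_add, Nat.add_sub_add_right]
    simp [add_mul]
  have hp : p * ∑ j ∈ range (s + 1), (M.choose j : ℝ) * p ^ j * (1 - p) ^ (M - j)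
      = ∑ i ∈ range s, (M.choose i : ℝ) * p ^ (i + 1) * (1 - p) ^ (M - i)
        + M.choose s * p ^ (s + 1) * (1 - p) ^ (M - s) := by
    rw [mul_sum, sum_range_succ]
    exact congrArg₂ _ (sum_congr rfl fun i _ => by ring) (by ring)
  have hq : (1 - p) * ∑ j ∈ range (s + 1), (M.choose j : ℝ) * p ^ j * (1 - p) ^ (M - j)
      = ∑ i ∈ range s, (M.choose (i + 1) : ℝ) * p ^ (i + 1) * (1 - p) ^ (M - i)
        + (1 - p) ^ (M + 1) := by
    rw [mul_sum, sum_range_succ']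
    refine congrArg₂ _ (sum_congr rfl fun i hi => ?_) (by simp [pow_succ'])
    rw [show M - i = M - (i + 1) + 1 by have := mem_range.1 hi; omega, pow_succ]
    ring
  linear_combination hpascal - hp - hq

lemma sum_negBinomial_add_sum_binomial (p : ℝ) {n : ℕ} (hn : 0 < n) (m : ℕ) :
    ∑ k ∈ range (m + 1), ((k + n - 1).choose k : ℝ) * p ^ n * (1 - p) ^ k
      + ∑ j ∈ range n, ((m + n).choose j : ℝ) * p ^ j * (1 - p) ^ (m + n - j) = 1 := by
  obtain ⟨s, rfl⟩ := Nat.exists_eq_add_one_of_ne_zero hn.ne'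
  simp only [Nat.add_succ_sub_one]
  induction m with
  | zero =>
    have h : ∑ j ∈ range (s + 1 + 1), ((s + 1).choose j : ℝ) * p ^ j * (1 - p) ^ (s + 1 - j)
        = 1 :=
      calc _ = (p + (1 - p)) ^ (s + 1) := by
            rw [add_pow]; exact sum_congr rfl fun _ _ => by ring
        _ = 1 := by ring
    rw [sum_range_succ] at h
    simp only [sum_range_one, zero_add, Nat.choose_self, Nat.choose_zero_right,
      Nat.sub_self] at h ⊢
    linarith
  | succ m ih =>
    have hstep := sum_range_succ_choose_add_succ p (M := m + (s + 1)) (s := s) (by omega)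
    rw [show m + (s + 1) - s = m + 1 by omega, show m + (s + 1) = m + 1 + s by ring,
      ← Nat.choose_symm_add] at hstep
    rw [show m + (s + 1) = m + 1 + s by ring] at ih
    rw [sum_range_succ, show m + 1 + (s + 1) = m + 1 + s + 1 by ring]
    linarith

lemma binomial_Iio (N n : ℕ) (p : I) :
    Bin(N, p) (Set.Iio n)
      = ENNReal.ofReal (∑ j ∈ range n, (N.choose j : ℝ) * p ^ j * (1 - p) ^ (N - j)) := by
  rw [ENNReal.ofReal_sum_of_nonneg fun _ _ => binomial_nonneg, ← Finset.coe_range,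
    ← sum_measure_singleton]
  exact sum_congr rfl fun j _ => binomial_singleton N j p

lemma measure_lt_eq_binomial_Iio {Ω : Type*} [MeasurableSpace Ω] (μ : Measure Ω)
    [IsProbabilityMeasure μ] (p : I) {n : ℕ} (hn : 0 < n) {Z : Ω → ℕ} (hZ : Measurable Z)
    (hlaw : ∀ k, μ {ω | Z ω = k}
      = ENNReal.ofReal ((k + n - 1).choose k * p ^ n * (1 - p) ^ k)) (m : ℕ) :
    μ {ω | m < Z ω} = Bin(m + n, p) (Set.Iio n) := by
  have hnb : ∀ k : ℕ, (0 : ℝ) ≤ (k + n - 1).choose k * p ^ n * (1 - p) ^ k := fun k =>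
    mul_nonneg (mul_nonneg (Nat.cast_nonneg _) (pow_nonneg p.2.1 _))
      (pow_nonneg (sub_nonneg.2 p.2.2) _)
  have hcdf : μ {ω | Z ω ≤ m}
      = ENNReal.ofReal (∑ k ∈ range (m + 1), (k + n - 1).choose k * p ^ n * (1 - p) ^ k) := by
    calc μ {ω | Z ω ≤ m} = μ (Z ⁻¹' ↑(range (m + 1))) := by
          congr 1; ext; simp
      _ = ∑ k ∈ range (m + 1), μ (Z ⁻¹' {k}) :=
          (sum_measure_preimage_singleton _ fun k _ => hZ (measurableSet_singleton k)).symm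
      _ = _ := by
          rw [ENNReal.ofReal_sum_of_nonneg fun k _ => hnb k]
          exact sum_congr rfl fun k _ => hlaw k
  have hsum := sum_negBinomial_add_sum_binomial p hn m
  rw [show {ω | m < Z ω} = {ω | Z ω ≤ m}ᶜ by ext; simp,
    prob_compl_eq_one_sub (s := {ω | Z ω ≤ m}) (hZ measurableSet_Iic), hcdf, binomial_Iio,
    eq_sub_of_add_eq' hsum, ENNReal.ofReal_sub _ (sum_nonneg fun k _ => hnb k), ENNReal.ofReal_one]

lemma mul_mul_le_of_lt_add_one {p η : ℝ} (hp0 : 0 < p) (hp1 : p ≤ 1) {n m : ℕ}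
    (hm : n * ((1 - p) / p + η) < m + 1) : n * p * η ≤ ((m + n : ℕ) : ℝ) * p - (n - 1) := by
  have hmp := mul_lt_mul_of_pos_right hm hp0
  have hcancel : n * ((1 - p) / p + η) * p = n * (1 - p) + n * p * η := by field_simp
  push_cast
  linarith

lemma hoeffding_exponent_le {p η : ℝ} (hp0 : 0 < p) (hp1 : p ≤ 1) (hη : 0 ≤ η) {n m : ℕ}
    (hn : 0 < n) (hm₁ : (m : ℝ) ≤ n * ((1 - p) / p + η))
    (hm₂ : n * ((1 - p) / p + η) < m + 1) :
    -2 * (((m + n : ℕ) : ℝ) * p - (n - 1)) ^ 2 / (m + n : ℕ)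
      ≤ -(2 * n * η ^ 2) / ((1 + (1 - p) / p) ^ 2 * (η + 1 + (1 - p) / p)) := by
  have hgap := mul_mul_le_of_lt_add_one hp0 hp1 hm₂
  have hN : ((m + n : ℕ) : ℝ) ≤ n * (1 + (1 - p) / p + η) := by push_cast; linarith
  have hsq : (n * p * η) ^ 2 / (n * (1 + (1 - p) / p + η))
      ≤ (((m + n : ℕ) : ℝ) * p - (n - 1)) ^ 2 / (m + n : ℕ) := by
    gcongr
  calc -2 * (((m + n : ℕ) : ℝ) * p - (n - 1)) ^ 2 / (m + n : ℕ)
      ≤ -2 * (n * p * η) ^ 2 / (n * (1 + (1 - p) / p + η)) := by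
        rw [mul_div_assoc, mul_div_assoc]; linarith
    _ = _ := by field_simp; ring

/-- Upper-tail deviation of a negative binomial random variable Z ∼ NB(n,p)
(counting failures before the n-th success), with mean rate μ' = (1-p)/p:
for any η > 0, Pr(Z/n - μ' > η) ≤ exp(-2nη² / ((1+μ')²(η+1+μ'))). -/
theorem negative_binomial_upper_tail {Ω : Type*} [MeasurableSpace Ω]
    (μ : Measure Ω) [IsProbabilityMeasure μ]
    (p : ℝ) (hp0 : 0 < p) (hp1 : p < 1) (n : ℕ) (hn : 0 < n)
    (Z : Ω → ℕ) (hmeas : Measurable Z)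
    (hlaw : ∀ m, μ {ω | Z ω = m}
      = ENNReal.ofReal ((Nat.choose (m + n - 1) m : ℝ) * p ^ n * (1 - p) ^ m))
    (η : ℝ) (hη : 0 < η) :
    μ {ω | (1 - p) / p + η < (Z ω : ℝ) / n}
      ≤ ENNReal.ofReal (Real.exp (-(2 * n * η ^ 2)
          / ((1 + (1 - p) / p) ^ 2 * (η + 1 + (1 - p) / p)))) := by
  have hx : 0 ≤ n * ((1 - p) / p + η) :=
    mul_nonneg n.cast_nonneg (add_nonneg (div_nonneg (by linarith) hp0.le) hη.le)
  set m := ⌊n * ((1 - p) / p + η)⌋₊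
  have hm : n * ((1 - p) / p + η) < m + 1 := Nat.lt_floor_add_one _
  have hevent : {ω | (1 - p) / p + η < (Z ω : ℝ) / n} = {ω | m < Z ω} := by
    ext ω
    rw [Set.mem_ofPred_eq, lt_div_iff₀ (Nat.cast_pos.2 hn), mul_comm, Set.mem_ofPred_eq,
      Nat.floor_lt hx]
  have hIio : Set.Iio n = {k : ℕ | (k : ℝ) ≤ n - 1} := by
    ext k
    simp only [Set.mem_Iio, Set.mem_ofPred_eq, le_sub_iff_add_le]
    norm_cast
  rw [hevent, measure_lt_eq_binomial_Iio μ ⟨p, hp0.le, hp1.le⟩ hn hmeas hlaw m, hIio,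
    ← ofReal_measureReal]
  refine ENNReal.ofReal_le_ofReal <|
    (binomial_real_setOf_le_le_exp ⟨p, hp0.le, hp1.le⟩ (N := m + n) (by omega) ?_).trans <|
      exp_le_exp.2 <| hoeffding_exponent_le hp0 hp1.le hη.le hn (Nat.floor_le hx) hm
  have := mul_mul_le_of_lt_add_one hp0 hp1.le hm
  have := mul_pos (mul_pos (Nat.cast_pos.2 hn) hp0) hη
  simp only
  linarith
end

section
/- Rank-broken pairwise estimates concentrate: let S₁,…,S_T be subsets (possibly adaptively chosen) each containing fixed items i and j, and i_t the Plackett-Luce winner of S_t. With n_i(T) = #{t : i_t = i} and n_{ij}(T) = #{t : i_t ∈ {i,j}}, for any positive integer v and η ∈ (0,1): Pr( n_i(T)/n_{ij}(T) - θ_i/(θ_i+θ_j) ≥ η and n_{ij}(T) ≥ v ) ≤ exp(-2vη²). -/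
/-!
Put `p = θ i / (θ i + θ j)`, `Mₜ = n_i(t) - p n_{ij}(t)` and `Nₜ = n_{ij}(t)`. Conditionally on the
past and on a win of `i` or `j`, the winner is `i` with probability exactly `p`, whatever `S_t` is;
so by Hoeffding's lemma for this Bernoulli variable, `exp (λ Mₜ - λ² Nₜ / 8)` is a nonnegative
supermartingale started at `1`. On the event in question `Mₜ ≥ η Nₜ` and `Nₜ ≥ v`, so with
`λ = 4η` the supermartingale is at least `exp (2 v η²)` there, and Markov's inequality concludes.
-/

open MeasureTheory ProbabilityTheory Real

theorem bernoulli_mgf_le {p : ℝ} (hp0 : 0 ≤ p) (hp1 : p ≤ 1) (t : ℝ) :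
    p * exp (t * (1 - p)) + (1 - p) * exp (t * -p) ≤ exp (t ^ 2 / 8) := by
  let q : unitInterval := ⟨p, hp0, hp1⟩
  have hmean : ∫ z, z ∂Ber(1 - p, -p, q) = 0 := by
    rw [integral_bernoulliMeasure, smul_eq_mul, smul_eq_mul]; ring
  have hsupp : ∀ᵐ z ∂Ber(1 - p, -p, q), z ∈ Set.Icc (-p) (1 - p) := by
    rw [ae_iff]
    refine bernoulliMeasure_apply_of_notMem_of_notMem q measurableSet_Icc.compl ?_ ?_ <;> simp
  calc p * exp (t * (1 - p)) + (1 - p) * exp (t * -p) = mgf id Ber(1 - p, -p, q) t := by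
        simp [mgf, integral_bernoulliMeasure, q]
    _ ≤ exp ((‖1 - p - -p‖₊ / 2) ^ 2 * t ^ 2 / 2) :=
        (hasSubgaussianMGF_of_mem_Icc_of_integral_eq_zero aemeasurable_id hsupp hmean).mgf_le t
    _ = exp (t ^ 2 / 8) := by
        rw [show 1 - p - -p = 1 by ring, nnnorm_one]; push_cast; ring_nf

theorem mul_exp_add_mul_exp_le {a b : ℝ} (ha : 0 ≤ a) (hb : 0 ≤ b) (t : ℝ) :
    a * exp (t * (1 - a / (a + b)) - t ^ 2 / 8) + b * exp (t * -(a / (a + b)) - t ^ 2 / 8)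
      ≤ a + b := by
  rcases (add_nonneg ha hb).eq_or_lt with hab | hab
  · obtain ⟨rfl, rfl⟩ : a = 0 ∧ b = 0 := ⟨by linarith, by linarith⟩
    simp
  set p := a / (a + b)
  have hp0 : 0 ≤ p := div_nonneg ha hab.le
  have hp1 : p ≤ 1 := div_le_one_of_le₀ (by linarith) hab.le
  have ha' : a = (a + b) * p := by simp only [p]; field_simp
  have hb' : b = (a + b) * (1 - p) := by simp only [p]; field_simp; ring
  calc a * exp (t * (1 - p) - t ^ 2 / 8) + b * exp (t * -p - t ^ 2 / 8)
      = (a + b) * (p * exp (t * (1 - p)) + (1 - p) * exp (t * -p)) * exp (-(t ^ 2 / 8)) := by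
        rw [sub_eq_add_neg, sub_eq_add_neg _ (t ^ 2 / 8), exp_add, exp_add]
        nth_rewrite 1 [ha']; nth_rewrite 2 [hb']; ring
    _ ≤ (a + b) * exp (t ^ 2 / 8) * exp (-(t ^ 2 / 8)) := by
        gcongr; exact bernoulli_mgf_le hp0 hp1 t
    _ = a + b := by rw [mul_assoc, ← exp_add, add_neg_cancel, exp_zero, mul_one]

theorem two_mul_mul_sq_le_of_le_div_sub {ni nij p η v : ℝ} (hv : 0 < v) (hη : 0 ≤ η)
    (hvn : v ≤ nij) (h : η ≤ ni / nij - p) :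
    2 * v * η ^ 2 ≤ 4 * η * (ni - p * nij) - (4 * η) ^ 2 / 8 * nij := by
  have hn : 0 < nij := hv.trans_le hvn
  have : (η + p) * nij ≤ ni := (le_div_iff₀ hn).1 (by linarith)
  nlinarith

section PairwiseWeight

variable {α : Type*} [DecidableEq α]

/-- The factor by which a win of `a` multiplies the supermartingale `exp (t Mₜ - t² Nₜ / 8)`. -/
noncomputable def pairwiseWeight (p t : ℝ) (i j a : α) : ℝ :=
  exp (t * ((if a = i then 1 else 0) - p * (if a = i ∨ a = j then 1 else 0))
    - t ^ 2 / 8 * (if a = i ∨ a = j then 1 else 0))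

theorem pairwiseWeight_pos {p t : ℝ} {i j a : α} : 0 < pairwiseWeight p t i j a :=
  exp_pos _

theorem pairwiseWeight_of_ne {p t : ℝ} {i j a : α} (hi : a ≠ i) (hj : a ≠ j) :
    pairwiseWeight p t i j a = 1 := by
  simp [pairwiseWeight, hi, hj]

theorem pairwiseWeight_left (p t : ℝ) (i j : α) :
    pairwiseWeight p t i j i = exp (t * (1 - p) - t ^ 2 / 8) := by
  simp [pairwiseWeight]

theorem pairwiseWeight_right (p t : ℝ) {i j : α} (hij : i ≠ j) :
    pairwiseWeight p t i j j = exp (t * -p - t ^ 2 / 8) := by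
  simp [pairwiseWeight, hij.symm]

theorem prod_pairwiseWeight {ι : Type*} (s : Finset ι) (f : ι → α) (p t : ℝ) (i j : α) :
    ∏ k ∈ s, pairwiseWeight p t i j (f k)
      = exp (t * ((s.filter fun k => f k = i).card
            - p * (s.filter fun k => f k = i ∨ f k = j).card)
          - t ^ 2 / 8 * (s.filter fun k => f k = i ∨ f k = j).card) := by
  simp only [pairwiseWeight, ← exp_sum, Finset.sum_sub_distrib, ← Finset.mul_sum,
    Finset.sum_boole]

theorem sum_mul_pairwiseWeight_le {θ : α → ℝ} (hθ : ∀ a, 0 ≤ θ a) (t : ℝ) {i j : α}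
    (hij : i ≠ j) {s : Finset α} (hi : i ∈ s) (hj : j ∈ s) :
    ∑ a ∈ s, θ a * pairwiseWeight (θ i / (θ i + θ j)) t i j a ≤ ∑ a ∈ s, θ a := by
  let w := pairwiseWeight (θ i / (θ i + θ j)) t i j
  have hsplit : ∑ a ∈ s, θ a * w a = ∑ a ∈ s, θ a + ∑ a ∈ s, θ a * (w a - 1) := by
    rw [← Finset.sum_add_distrib]; exact Finset.sum_congr rfl fun a _ => by ring
  have hpair : ∑ a ∈ s, θ a * (w a - 1) = θ i * (w i - 1) + θ j * (w j - 1) := by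
    rw [← Finset.sum_pair (f := fun a => θ a * (w a - 1)) hij]
    refine (Finset.sum_subset (by simp [Finset.insert_subset_iff, hi, hj]) fun a _ ha => ?_).symm
    simp only [Finset.mem_insert, Finset.mem_singleton, not_or] at ha
    simp [w, pairwiseWeight_of_ne ha.1 ha.2]
  have hhoeffding : θ i * w i + θ j * w j ≤ θ i + θ j := by
    simp only [w, pairwiseWeight_left, pairwiseWeight_right _ _ hij]
    exact mul_exp_add_mul_exp_le (hθ i) (hθ j) t
  change ∑ a ∈ s, θ a * w a ≤ _
  linarith

end PairwiseWeight

section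

variable {Ω : Type*} {m m0 : MeasurableSpace Ω} {μ : Measure Ω}

theorem measure_ge_le_of_integral_le_one [IsFiniteMeasure μ] {f : Ω → ℝ} (hf0 : 0 ≤ᵐ[μ] f)
    (hf : Integrable f μ) (h1 : ∫ ω, f ω ∂μ ≤ 1) {c : ℝ} (hc : 0 < c) :
    μ {ω | c ≤ f ω} ≤ ENNReal.ofReal c⁻¹ := by
  rw [← ofReal_measureReal]
  refine ENNReal.ofReal_le_ofReal ?_
  rw [← one_div, le_div_iff₀' hc]
  exact (mul_meas_ge_le_integral_of_nonneg hf0 hf c).trans h1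

section ProductSupermartingale

variable {ℱ : Filtration ℕ m0} {g : ℕ → Ω → ℝ} {C : ℝ}

theorem integrable_prod_range [IsFiniteMeasure μ] (hmeas : ∀ t, Measurable[ℱ (t + 1)] (g t))
    (hnonneg : ∀ t ω, 0 ≤ g t ω) (hle : ∀ t ω, g t ω ≤ C) (T : ℕ) :
    Integrable (fun ω => ∏ t ∈ Finset.range T, g t ω) μ := by
  refine .of_mem_Icc 0 (C ^ T) ?_ (ae_of_all _ fun ω => ⟨?_, ?_⟩)
  · exact (Finset.measurable_fun_prod _ fun t _ => (hmeas t).mono (ℱ.le _) le_rfl).aemeasurable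
  · exact Finset.prod_nonneg fun t _ => hnonneg t ω
  · calc ∏ t ∈ Finset.range T, g t ω ≤ ∏ _t ∈ Finset.range T, C :=
          Finset.prod_le_prod (fun t _ => hnonneg t ω) fun t _ => hle t ω
      _ = C ^ T := by simp

theorem integral_prod_range_le_one [IsProbabilityMeasure μ]
    (hmeas : ∀ t, Measurable[ℱ (t + 1)] (g t)) (hnonneg : ∀ t ω, 0 ≤ g t ω)
    (hle : ∀ t ω, g t ω ≤ C) (hcond : ∀ t, μ[g t | ℱ t] ≤ᵐ[μ] 1) (T : ℕ) :
    ∫ ω, ∏ t ∈ Finset.range T, g t ω ∂μ ≤ 1 := by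
  let P : ℕ → Ω → ℝ := fun T ω => ∏ t ∈ Finset.range T, g t ω
  have hP_int : ∀ T, Integrable (P T) μ := integrable_prod_range hmeas hnonneg hle
  have hP_meas (T : ℕ) : Measurable[ℱ T] (P T) :=
    Finset.measurable_fun_prod _ fun t ht =>
      (hmeas t).mono (ℱ.mono (Finset.mem_range.1 ht)) le_rfl
  induction T with
  | zero => simp
  | succ T ih =>
    have hsucc : P (T + 1) = P T * g T := funext fun ω => Finset.prod_range_succ _ T
    have hpull : μ[P T * g T | ℱ T] =ᵐ[μ] P T * μ[g T | ℱ T] :=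
      condExp_mul_of_stronglyMeasurable_left (hP_meas T).stronglyMeasurable (hsucc ▸ hP_int _)
        (.of_mem_Icc 0 C ((hmeas T).mono (ℱ.le _) le_rfl).aemeasurable
          (ae_of_all _ fun ω => ⟨hnonneg T ω, hle T ω⟩))
    calc ∫ ω, P (T + 1) ω ∂μ = ∫ ω, (μ[P T * g T | ℱ T]) ω ∂μ := by
          rw [hsucc, integral_condExp (ℱ.le T)]
      _ = ∫ ω, (P T * μ[g T | ℱ T]) ω ∂μ := integral_congr_ae hpull
      _ ≤ ∫ ω, P T ω ∂μ := by
          refine integral_mono_ae (integrable_condExp.congr hpull) (hP_int T) ?_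
          filter_upwards [hcond T] with ω hω
          exact mul_le_of_le_one_right (Finset.prod_nonneg fun t _ => hnonneg t ω) hω
      _ ≤ 1 := ih

theorem measure_le_prod_range_le_ofReal_inv [IsProbabilityMeasure μ]
    (hmeas : ∀ t, Measurable[ℱ (t + 1)] (g t)) (hnonneg : ∀ t ω, 0 ≤ g t ω)
    (hle : ∀ t ω, g t ω ≤ C) (hcond : ∀ t, μ[g t | ℱ t] ≤ᵐ[μ] 1) (T : ℕ) {c : ℝ} (hc : 0 < c) :
    μ {ω | c ≤ ∏ t ∈ Finset.range T, g t ω} ≤ ENNReal.ofReal c⁻¹ :=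
  measure_ge_le_of_integral_le_one
    (ae_of_all _ fun ω => Finset.prod_nonneg fun t _ => hnonneg t ω)
    (integrable_prod_range hmeas hnonneg hle T)
    (integral_prod_range_le_one hmeas hnonneg hle hcond T) hc

end ProductSupermartingale

section PlackettLuce

variable {α : Type*} [Fintype α] [DecidableEq α] [MeasurableSpace α] [MeasurableSingletonClass α]
  [IsFiniteMeasure μ] {X : Ω → α} {θ : α → ℝ} {S : Ω → Finset α}

theorem condExp_comp_ae_eq_sum_div (hX : Measurable X)
    (hcond : ∀ a, μ[{ω | X ω = a}.indicator (fun _ => (1 : ℝ)) | m]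
      =ᵐ[μ] fun ω => if a ∈ S ω then θ a / ∑ k ∈ S ω, θ k else 0) (w : α → ℝ) :
    μ[fun ω => w (X ω) | m] =ᵐ[μ] fun ω => (∑ a ∈ S ω, θ a * w a) / ∑ a ∈ S ω, θ a := by
  have hdecomp : (fun ω => w (X ω)) = ∑ a, w a • {ω | X ω = a}.indicator (fun _ => (1 : ℝ)) := by
    ext ω
    simp [Set.indicator_apply]
  have hint : ∀ a ∈ Finset.univ,
      Integrable (w a • {ω | X ω = a}.indicator (fun _ => (1 : ℝ))) μ := fun a _ =>
    ((integrable_const (1 : ℝ)).indicator (μ := μ) (hX (measurableSet_singleton a))).smul (w a)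
  have hlin := (condExp_finsetSum hint m).trans
    (eventuallyEq_sum fun a _ => condExp_smul (w a) _ m)
  filter_upwards [hdecomp ▸ hlin, ae_all_iff.2 hcond] with ω hω hcondω
  rw [hω, Finset.sum_apply, Finset.sum_div]
  simp only [Pi.smul_apply, hcondω, smul_eq_mul, mul_ite, mul_zero]
  rw [Finset.sum_ite_mem, Finset.univ_inter]
  exact Finset.sum_congr rfl fun a _ => by ring

theorem condExp_pairwiseWeight_le_one (hX : Measurable X) (hθ : ∀ a, 0 < θ a)
    (hcond : ∀ a, μ[{ω | X ω = a}.indicator (fun _ => (1 : ℝ)) | m]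
      =ᵐ[μ] fun ω => if a ∈ S ω then θ a / ∑ k ∈ S ω, θ k else 0)
    {i j : α} (hij : i ≠ j) (hmem : ∀ ω, i ∈ S ω ∧ j ∈ S ω) (t : ℝ) :
    μ[fun ω => pairwiseWeight (θ i / (θ i + θ j)) t i j (X ω) | m] ≤ᵐ[μ] 1 := by
  filter_upwards [condExp_comp_ae_eq_sum_div hX hcond _] with ω hω
  rw [hω, Pi.one_apply, div_le_one (Finset.sum_pos (fun a _ => hθ a) ⟨i, (hmem ω).1⟩)]
  exact sum_mul_pairwiseWeight_le (fun a => (hθ a).le) t hij (hmem ω).1 (hmem ω).2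

end PlackettLuce

end

theorem rank_breaking_concentration_general {Ω : Type*} {m0 : MeasurableSpace Ω}
    (μ : Measure Ω) [IsProbabilityMeasure μ] {n : ℕ}
    (θ : Fin n → ℝ) (hθ : ∀ a, 0 < θ a) (i j : Fin n) (hij : i ≠ j)
    (ℱ : Filtration ℕ m0)
    (S : ℕ → Ω → Finset (Fin n)) (I : ℕ → Ω → Fin n)
    (hI_meas : ∀ t, @Measurable Ω (Fin n) (ℱ (t + 1)) _ (I t))
    (hmem : ∀ t ω, i ∈ S t ω ∧ j ∈ S t ω)
    (hcond : ∀ t a,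
      (μ[Set.indicator {ω | I t ω = a} (fun _ => (1 : ℝ)) | ℱ t])
        =ᵐ[μ] fun ω => if a ∈ S t ω then θ a / ∑ k ∈ S t ω, θ k else 0)
    (T v : ℕ) (hv : 0 < v) (η : ℝ) (hη0 : 0 < η) :
    μ {ω | η ≤ (((Finset.range T).filter fun t => I t ω = i).card : ℝ)
              / (((Finset.range T).filter fun t => I t ω = i ∨ I t ω = j).card : ℝ)
            - θ i / (θ i + θ j)
          ∧ v ≤ ((Finset.range T).filter fun t => I t ω = i ∨ I t ω = j).card}
      ≤ ENNReal.ofReal (Real.exp (-2 * v * η ^ 2)) := by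
  let w := pairwiseWeight (θ i / (θ i + θ j)) (4 * η) i j
  calc μ _ ≤ μ {ω | exp (2 * v * η ^ 2) ≤ ∏ t ∈ Finset.range T, w (I t ω)} := by
        refine measure_mono fun ω ⟨hdev, hcount⟩ => ?_
        rw [Set.mem_ofPred_eq, prod_pairwiseWeight, exp_le_exp]
        exact two_mul_mul_sq_le_of_le_div_sub (by exact_mod_cast hv) hη0.le
          (by exact_mod_cast hcount) hdev
    _ ≤ ENNReal.ofReal (exp (2 * v * η ^ 2))⁻¹ :=
        measure_le_prod_range_le_ofReal_inv (ℱ := ℱ) (C := ∑ a, w a)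
          (fun t => (measurable_of_finite w).comp (hI_meas t)) (fun _ _ => pairwiseWeight_pos.le)
          (fun t ω => Finset.single_le_sum (f := w) (fun _ _ => pairwiseWeight_pos.le)
            (Finset.mem_univ (I t ω)))
          (fun t => condExp_pairwiseWeight_le_one ((hI_meas t).mono (ℱ.le _) le_rfl) hθ (hcond t)
            hij (hmem t) _) T (exp_pos _)
    _ = ENNReal.ofReal (exp (-2 * v * η ^ 2)) := by rw [← exp_neg, neg_mul, neg_mul]

/-- Rank-broken pairwise estimates concentrate (Lemma: pairwise win-probability
estimates for the Plackett-Luce model).  Subsets S_t containing fixed items i,j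
are chosen adaptively (measurably w.r.t. the past filtration ℱ), and the winner
I_t of S_t is drawn from the Plackett-Luce distribution on S_t conditionally on
the past.  With n_i(T) = #{t < T : I_t = i} and
n_{ij}(T) = #{t < T : I_t ∈ {i,j}}, for every positive integer v and η ∈ (0,1):
Pr( n_i(T)/n_{ij}(T) - θ_i/(θ_i+θ_j) ≥ η ∧ n_{ij}(T) ≥ v ) ≤ exp(-2vη²). -/
theorem rank_breaking_concentration {Ω : Type*} {m0 : MeasurableSpace Ω}
    (μ : Measure Ω) [IsProbabilityMeasure μ] {n : ℕ}
    (θ : Fin n → ℝ) (hθ : ∀ a, 0 < θ a) (i j : Fin n) (hij : i ≠ j)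
    (ℱ : Filtration ℕ m0)
    (S : ℕ → Ω → Finset (Fin n)) (I : ℕ → Ω → Fin n)
    (hS_adapted : ∀ t, @Measurable Ω (Finset (Fin n)) (ℱ t) ⊤ (S t))
    (hI_meas : ∀ t, @Measurable Ω (Fin n) (ℱ (t + 1)) _ (I t))
    (hmem : ∀ t ω, i ∈ S t ω ∧ j ∈ S t ω)
    (hcond : ∀ t a,
      (μ[Set.indicator {ω | I t ω = a} (fun _ => (1 : ℝ)) | ℱ t])
        =ᵐ[μ] fun ω => if a ∈ S t ω then θ a / ∑ k ∈ S t ω, θ k else 0)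
    (T v : ℕ) (hv : 0 < v) (η : ℝ) (hη0 : 0 < η) (hη1 : η < 1) :
    μ {ω | η ≤ (((Finset.range T).filter fun t => I t ω = i).card : ℝ)
              / (((Finset.range T).filter fun t => I t ω = i ∨ I t ω = j).card : ℝ)
            - θ i / (θ i + θ j)
          ∧ v ≤ ((Finset.range T).filter fun t => I t ω = i ∨ I t ω = j).card}
      ≤ ENNReal.ofReal (Real.exp (-2 * v * η ^ 2)) :=
  rank_breaking_concentration_general μ θ hθ i j hij ℱ S I hI_meas hmem hcond T v hv η hη0
end

section
/- KL upper bound between two Plackett-Luce winner distributions (no pivot case): with R = (1/2+ε)/(1/2-ε) > 1, k items of which r have weight R² and k-r have weight 1 in instance P, versus r+1 of weight R² and k-r-1 of weight 1 in instance Q (the altered item switching from weight 1 to R²), the chi-square bound KL(P,Q) ≤ Σ_x P(x)²/Q(x) - 1 evaluates to at most (R - 1/R)² · (rR² + k - r - 1)/(rR² + k - r)². -/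
/-!
Both distributions are normalised weight vectors, `P = p / A` and `Q = q / B`, so
`∑ P² / Q = B / A² · ∑ p² / q`. With `a = R²`, the ratio `p² / q` is `a` on the `r` common
heavy outcomes, `a⁻¹` on the promoted one and `1` elsewhere; writing `C = r a + (k - r - 1)`
we have `A = C + 1`, `B = C + a`, and `(C + a)(C + a⁻¹) - (C + 1)² = (a + a⁻¹ - 2) C`,
with `a + a⁻¹ - 2 = (R - 1/R)²`. The bound therefore holds with equality.
-/

open Finset

theorem Fin.sum_ite_lt_ite_eq {M : Type*} [AddCommMonoid M] {k r : ℕ} (hr : r + 1 ≤ k)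
    (a b c : M) :
    ∑ x : Fin k, (if (x : ℕ) < r then a else if (x : ℕ) = r then b else c)
      = r • a + b + (k - (r + 1)) • c := by
  set f : ℕ → M := fun i => if i < r then a else if i = r then b else c
  have below : ∀ i ∈ range r, f i = a := fun i hi => if_pos (mem_range.mp hi)
  have above : ∀ i ∈ Ico (r + 1) k, f i = c := fun i hi => by
    have := mem_Ico.mp hi
    simp only [f, if_neg (show ¬i < r by omega), if_neg (show i ≠ r by omega)]
  rw [Fin.sum_univ_eq_sum_range f, ← sum_range_add_sum_Ico _ hr, sum_range_succ,
    sum_congr rfl below, sum_congr rfl above]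
  simp [f]

section
variable {K : Type*} [Field K]

theorem div_sq_div_div (p q A B : K) : (p / A) ^ 2 / (q / B) = B / A ^ 2 * (p ^ 2 / q) := by
  rw [div_div_eq_mul_div]
  ring

theorem ite_sq_div_ite {a : K} (ha : a ≠ 0) (i r : ℕ) :
    (if i < r then a else 1) ^ 2 / (if i < r + 1 then a else 1)
      = if i < r then a else if i = r then a⁻¹ else 1 := by
  split_ifs <;> first | omega | field_simp

theorem chiSq_two_level_identity {a C : K} (ha : a ≠ 0) (hC : C + 1 ≠ 0) :
    (C + a) / (C + 1) ^ 2 * (C + a⁻¹) - 1 = (a + a⁻¹ - 2) * C / (C + 1) ^ 2 := by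
  field_simp
  ring
end

theorem kl_chi_square_bound_general (ε : ℝ) (hε0 : 0 < ε) (hε : ε < 1/2)
    (k r : ℕ) (hr : r + 1 ≤ k)
    (R A B : ℝ) (hR : R = (1/2 + ε) / (1/2 - ε))
    (hA : A = r * R ^ 2 + ((k : ℝ) - r))
    (hB : B = (r + 1) * R ^ 2 + ((k : ℝ) - r - 1))
    (P Q : Fin k → ℝ)
    (hP : ∀ x, P x = if (x : ℕ) < r then R ^ 2 / A else 1 / A)
    (hQ : ∀ x, Q x = if (x : ℕ) < r + 1 then R ^ 2 / B else 1 / B) :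
    (∑ x, (P x) ^ 2 / Q x) - 1
      ≤ (R - 1 / R) ^ 2 * (r * R ^ 2 + ((k : ℝ) - r - 1)) / A ^ 2 := by
  have hR0 : R ≠ 0 := by rw [hR]; exact (div_pos (by linarith) (by linarith)).ne'
  have hR2 : R ^ 2 ≠ 0 := pow_ne_zero 2 hR0
  set C : ℝ := r * R ^ 2 + ((k : ℝ) - r - 1)
  have hAC : A = C + 1 := by rw [hA]; ring
  have hBC : B = C + R ^ 2 := by rw [hB]; ring
  have hC : 0 < C + 1 := by
    have : (r : ℝ) + 1 ≤ k := by exact_mod_cast hr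
    have : 0 ≤ (r : ℝ) * R ^ 2 := by positivity
    linarith
  have hterm : ∀ x : Fin k, P x ^ 2 / Q x
      = B / A ^ 2 * if (x : ℕ) < r then R ^ 2 else if (x : ℕ) = r then (R ^ 2)⁻¹ else 1 := by
    intro x
    rw [hP, hQ, ← ite_div, ← ite_div, div_sq_div_div, ite_sq_div_ite hR2]
  have hsum : ∑ x, P x ^ 2 / Q x = B / A ^ 2 * (C + (R ^ 2)⁻¹) := by
    rw [sum_congr rfl fun x _ => hterm x, ← mul_sum, Fin.sum_ite_lt_ite_eq hr,
      nsmul_eq_mul, nsmul_eq_mul, Nat.cast_sub hr]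
    push_cast
    ring
  apply le_of_eq
  rw [hsum, hAC, hBC, chiSq_two_level_identity hR2 hC.ne']
  field_simp
  ring

/-- KL upper bound between two Plackett-Luce winner distributions (no pivot):
with R = (1/2+ε)/(1/2-ε) > 1, P the categorical distribution on k outcomes with
r outcomes of weight R² and k-r of weight 1, and Q the one where one additional
outcome of weight 1 is promoted to weight R², the chi-square bound
Σ_x P(x)²/Q(x) - 1 is at most (R - 1/R)²·(rR² + k - r - 1)/(rR² + k - r)². -/
theorem kl_chi_square_bound (ε : ℝ) (hε0 : 0 < ε) (hε : ε < 1/2)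
    (k r : ℕ) (hk : 0 < k) (hr : r + 1 ≤ k)
    (R A B : ℝ) (hR : R = (1/2 + ε) / (1/2 - ε))
    (hA : A = r * R ^ 2 + ((k : ℝ) - r))
    (hB : B = (r + 1) * R ^ 2 + ((k : ℝ) - r - 1))
    (P Q : Fin k → ℝ)
    (hP : ∀ x, P x = if (x : ℕ) < r then R ^ 2 / A else 1 / A)
    (hQ : ∀ x, Q x = if (x : ℕ) < r + 1 then R ^ 2 / B else 1 / B) :
    (∑ x, (P x) ^ 2 / Q x) - 1
      ≤ (R - 1 / R) ^ 2 * (r * R ^ 2 + ((k : ℝ) - r - 1)) / A ^ 2 :=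
  kl_chi_square_bound_general ε hε0 hε k r hr R A B hR hA hB P Q hP hQ
end
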